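/- arXiv:2201.13076 — 3 statements merged into one kernel-verified Lean document; each statement's English description precedes it below -/
import Mathlib

section
/- Let d ≥ 1. For every δ > 0 there exists C > 0 such that for all (x,y) in the global region G₁ with x ≠ 0 and y ≠ 0, one has sup_{0<s<1} s^{−d/2} e^{−(δ/s) Q_s(x,y)} ≤ C min{ (1+|x|)^d, (|x| sin θ(x,y))^{−d} }. -/
open MeasureTheory Matrix
open scoped ENNReal

noncomputable section

/-- The squared Euclidean norm `|x|²` on `ℝ^d`. -/
def nrm2 {d : ℕ} (x : Fin d → ℝ) : ℝ := ∑ i, x i ^ 2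

/-- The Euclidean norm `|x|` on `ℝ^d`. -/
def nrm {d : ℕ} (x : Fin d → ℝ) : ℝ := Real.sqrt (nrm2 x)

/-- The local region
`L_σ = {(x,y) : |x-y| ≤ σ min(1, |x+y|⁻¹)}`, written equivalently as
`|x-y| ≤ σ` and `|x-y|·|x+y| ≤ σ`. -/
def localRegion (d : ℕ) (σ : ℝ) : Set ((Fin d → ℝ) × (Fin d → ℝ)) :=
  {p | nrm (p.1 - p.2) ≤ σ ∧ nrm (p.1 - p.2) * nrm (p.1 + p.2) ≤ σ}

/-- The global region `G_σ = (ℝ^d × ℝ^d) \ L_σ`. -/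
def globalRegion (d : ℕ) (σ : ℝ) : Set ((Fin d → ℝ) × (Fin d → ℝ)) :=
  (localRegion d σ)ᶜ

/-- `sin θ(x,y)`, where `θ(x,y)` is the angle between `x` and `y`, i.e.
`cos θ(x,y) = ⟨x,y⟩/(|x||y|)`. -/
def sinAngle {d : ℕ} (x y : Fin d → ℝ) : ℝ :=
  Real.sin (Real.arccos ((∑ i, x i * y i) / (nrm x * nrm y)))

/-- The quadratic form `Q_s(x,y) = |(1+s)x - (1-s)y|²`. -/
def Qform {d : ℕ} (s : ℝ) (x y : Fin d → ℝ) : ℝ := ∑ i, ((1+s) * x i - (1-s) * y i) ^ 2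

/-!
With `t = s^{-1/2}` the quantity is `t^d e^{-δ t² Q_s}`, and `u^d e^{-u²} ≤ d!` shows that it is at
most `d! (√δ ρ)^{-d}` as soon as `ρ² ≤ Q_s`. Two lower bounds on `Q_s` are available. First,
`Q_s ≥ (1+s)² |x_⊥|² ≥ (|x| sin θ)²`, where `x_⊥` is the component of `x` orthogonal to `y`; this
gives the bound `(|x| sin θ)^{-d}`. Second, writing `x - y = ((1+s)x - (1-s)y) - s(x+y)`, the global
condition forces `Q_s ≥ (4(1+|x|))^{-2}` unless `s (1+|x|)² ≥ 1/8`, and in the latter case already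
`s^{-d/2} ≤ (√8 (1+|x|))^d`; this gives the bound `(1+|x|)^d`.
-/

open Real InnerProductGeometry
open scoped Nat

section HeatFactor

lemma pow_mul_exp_neg_sq_le_factorial (d : ℕ) {u : ℝ} (hu : 0 ≤ u) :
    u ^ d * exp (-u ^ 2) ≤ d ! := by
  have hfac : (1 : ℝ) ≤ d ! := by exact_mod_cast d.factorial_pos
  rcases le_total u 1 with hu1 | hu1
  · calc u ^ d * exp (-u ^ 2) ≤ 1 * 1 := by
          gcongr
          · exact pow_le_one₀ hu hu1
          · exact exp_le_one_iff.mpr (by nlinarith)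
      _ ≤ d ! := by linarith
  · have hpow : u ^ d ≤ (u ^ 2) ^ d := by
      rw [← pow_mul]; exact pow_le_pow_right₀ hu1 (by omega)
    have hexp : (u ^ 2) ^ d ≤ d ! * exp (u ^ 2) := by
      have := pow_div_factorial_le_exp (u ^ 2) (sq_nonneg u) d
      rwa [div_le_iff₀ (by positivity), mul_comm] at this
    calc u ^ d * exp (-u ^ 2) ≤ d ! * exp (u ^ 2) * exp (-u ^ 2) := by
          gcongr; exact hpow.trans hexp
      _ = d ! := by rw [mul_assoc, ← exp_add, add_neg_cancel, exp_zero, mul_one]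

lemma rpow_neg_natCast_div_two {s : ℝ} (hs : 0 ≤ s) (d : ℕ) :
    s ^ (-(d : ℝ) / 2) = (√s)⁻¹ ^ d := by
  rw [sqrt_eq_rpow, ← rpow_neg hs, ← rpow_natCast, ← rpow_mul hs]
  ring_nf

variable {d : ℕ}

lemma rpow_neg_half_mul_exp_le_of_sq_le {s δ ρ q : ℝ} (hs : 0 < s) (hδ : 0 < δ) (hρ : 0 < ρ)
    (hq : ρ ^ 2 ≤ q) :
    s ^ (-(d : ℝ) / 2) * exp (-(δ / s) * q) ≤ d ! * (√δ * ρ)⁻¹ ^ d := by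
  set t := (√s)⁻¹
  set a := √δ * ρ
  have ha : 0 < a := by positivity
  have hta : (t * a) ^ 2 = δ / s * ρ ^ 2 := by
    simp only [t, a, mul_pow, inv_pow, sq_sqrt hs.le, sq_sqrt hδ.le]
    ring
  have hexp : -(δ / s) * q ≤ -(t * a) ^ 2 := by
    rw [hta, neg_mul, neg_le_neg_iff]
    gcongr
  calc s ^ (-(d : ℝ) / 2) * exp (-(δ / s) * q) ≤ t ^ d * exp (-(t * a) ^ 2) := by
        rw [rpow_neg_natCast_div_two hs.le]
        gcongr
    _ = t ^ d * exp (-(t * a) ^ 2) * (a * a⁻¹) ^ d := by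
        rw [mul_inv_cancel₀ ha.ne', one_pow, mul_one]
    _ = (t * a) ^ d * exp (-(t * a) ^ 2) * a⁻¹ ^ d := by ring
    _ ≤ d ! * a⁻¹ ^ d := by
        gcongr
        exact pow_mul_exp_neg_sq_le_factorial d (by positivity)

lemma rpow_neg_half_mul_exp_le_of_one_le {s δ q M : ℝ} (hs : 0 < s) (hδ : 0 ≤ δ) (hq : 0 ≤ q)
    (hM : 0 ≤ M) (h : 1 ≤ s * M ^ 2) :
    s ^ (-(d : ℝ) / 2) * exp (-(δ / s) * q) ≤ M ^ d := by
  have hexp : exp (-(δ / s) * q) ≤ 1 := by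
    rw [exp_le_one_iff, neg_mul, neg_nonpos]
    positivity
  have hsM : (√s)⁻¹ ≤ M := by
    rw [inv_le_iff_one_le_mul₀ (sqrt_pos.mpr hs)]
    have : (√s * M) ^ 2 = s * M ^ 2 := by rw [mul_pow, sq_sqrt hs.le]
    nlinarith [mul_nonneg hM (sqrt_nonneg s)]
  calc s ^ (-(d : ℝ) / 2) * exp (-(δ / s) * q) ≤ (√s)⁻¹ ^ d * 1 := by
        rw [rpow_neg_natCast_div_two hs.le]
        gcongr
    _ ≤ M ^ d := by rw [mul_one]; gcongr

end HeatFactor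

section Geometry

lemma one_le_mul_norm_of_global {V : Type*} [SeminormedAddCommGroup V] [NormedSpace ℝ V]
    {x y : V} {s : ℝ} (hs : 0 < s) (hG : 1 < ‖x - y‖ ∨ 1 < ‖x - y‖ * ‖x + y‖)
    (hsmall : s * (1 + ‖x‖) ^ 2 < 1 / 8) :
    1 ≤ 4 * (1 + ‖x‖) * ‖(1 + s) • x - (1 - s) • y‖ := by
  set M := 1 + ‖x‖
  set ν := ‖(1 + s) • x - (1 - s) • y‖
  have hM : 1 ≤ M := by simp [M]
  have hdiff : ‖x - y‖ ≤ ν + s * ‖x + y‖ := by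
    have : x - y = ((1 + s) • x - (1 - s) • y) - s • (x + y) := by module
    calc ‖x - y‖ ≤ ν + ‖s • (x + y)‖ := by rw [this]; exact norm_sub_le _ _
      _ = ν + s * ‖x + y‖ := by rw [norm_smul, Real.norm_of_nonneg hs.le]
  have hsum : ‖x + y‖ ≤ 2 * ‖x‖ + ‖x - y‖ := by
    have : x + y = (2 : ℝ) • x - (x - y) := by module
    calc ‖x + y‖ ≤ ‖(2 : ℝ) • x‖ + ‖x - y‖ := by rw [this]; exact norm_sub_le _ _
      _ = 2 * ‖x‖ + ‖x - y‖ := by rw [norm_smul]; norm_num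
  have hsM : s * M < 1 / 8 := by nlinarith
  rcases le_or_gt ‖x - y‖ 1 with hA | hA
  · -- here `‖x + y‖ ≤ 2M`, so `‖x - y‖ > 1 / (2M)` while `s ‖x + y‖ < 1 / (4M)`
    have hAB : 1 < ‖x - y‖ * ‖x + y‖ := hG.resolve_left hA.not_gt
    have hB : ‖x + y‖ ≤ 2 * M := by simp only [M]; linarith
    nlinarith [mul_le_mul_of_nonneg_left hdiff (by positivity : (0 : ℝ) ≤ M),
      mul_le_mul_of_nonneg_left hB (norm_nonneg (x - y)),
      mul_le_mul_of_nonneg_left hB (by positivity : (0 : ℝ) ≤ M * s)]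
  · nlinarith [norm_nonneg x, norm_nonneg (x + y)]

lemma sq_norm_mul_sin_angle_le {V : Type*} [NormedAddCommGroup V] [InnerProductSpace ℝ V]
    (x y : V) {a : ℝ} (ha : 1 ≤ |a|) (c : ℝ) :
    (‖x‖ * sin (angle x y)) ^ 2 ≤ ‖a • x - c • y‖ ^ 2 := by
  have hexpand : ‖a • x - c • y‖ ^ 2 =
      a ^ 2 * ‖x‖ ^ 2 - 2 * (a * c) * inner ℝ x y + c ^ 2 * ‖y‖ ^ 2 := by
    rw [norm_sub_sq_real, norm_smul, norm_smul, real_inner_smul_left, real_inner_smul_right,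
      Real.norm_eq_abs, Real.norm_eq_abs, mul_pow, mul_pow, sq_abs, sq_abs]
    ring
  have ha2 : 1 ≤ a ^ 2 := by nlinarith [sq_abs a, abs_nonneg a]
  rcases eq_or_ne y 0 with rfl | hy
  · rw [angle_zero_right, sin_pi_div_two, mul_one, hexpand]
    simp only [inner_zero_right, norm_zero]
    nlinarith [sq_nonneg ‖x‖]
  have hy' : 0 < ‖y‖ ^ 2 := by positivity
  set θ := angle x y
  have hexcess : ‖a • x - c • y‖ ^ 2 * ‖y‖ ^ 2 - (‖x‖ * sin θ) ^ 2 * ‖y‖ ^ 2 =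
      (a ^ 2 - 1) * (‖x‖ * ‖y‖ * sin θ) ^ 2 + (a * (cos θ * (‖x‖ * ‖y‖)) - c * ‖y‖ ^ 2) ^ 2 := by
    rw [hexpand, ← cos_angle_mul_norm_mul_norm x y]
    linear_combination (-(a ^ 2 * ‖x‖ ^ 2 * ‖y‖ ^ 2)) * sin_sq_add_cos_sq θ
  refine le_of_mul_le_mul_right ?_ hy'
  nlinarith [mul_nonneg (sub_nonneg.mpr ha2) (sq_nonneg (‖x‖ * ‖y‖ * sin θ)),
    sq_nonneg (a * (cos θ * (‖x‖ * ‖y‖)) - c * ‖y‖ ^ 2)]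

end Geometry

section PointwiseBounds

variable {V : Type*}

lemma rpow_neg_half_mul_exp_le_one_add_norm_pow [SeminormedAddCommGroup V] [NormedSpace ℝ V]
    (d : ℕ) {δ s : ℝ} (hδ : 0 < δ) (hs : 0 < s) {x y : V}
    (hG : 1 < ‖x - y‖ ∨ 1 < ‖x - y‖ * ‖x + y‖) :
    s ^ (-(d : ℝ) / 2) * exp (-(δ / s) * ‖(1 + s) • x - (1 - s) • y‖ ^ 2) ≤
      (√8 ^ d + d ! * (4 / √δ) ^ d) * (1 + ‖x‖) ^ d := by
  set M := 1 + ‖x‖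
  have hM : 0 < M := by positivity
  rcases le_or_gt (1 / 8) (s * M ^ 2) with hlarge | hsmall
  · have h8 : 1 ≤ s * (√8 * M) ^ 2 := by
      rw [mul_pow, sq_sqrt (by norm_num)]; linarith
    calc _ ≤ (√8 * M) ^ d :=
          rpow_neg_half_mul_exp_le_of_one_le hs hδ.le (sq_nonneg _) (by positivity) h8
      _ ≤ _ := by
          rw [mul_pow]
          gcongr
          exact le_add_of_nonneg_right (by positivity)
  · have hν : (4 * M)⁻¹ ≤ ‖(1 + s) • x - (1 - s) • y‖ := by
      rw [inv_le_iff_one_le_mul₀ (by positivity), mul_comm]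
      exact one_le_mul_norm_of_global hs hG hsmall
    calc _ ≤ d ! * (√δ * (4 * M)⁻¹)⁻¹ ^ d :=
          rpow_neg_half_mul_exp_le_of_sq_le hs hδ (by positivity) (by gcongr)
      _ = d ! * (4 / √δ) ^ d * M ^ d := by
          rw [mul_inv, inv_inv, div_eq_mul_inv, mul_pow, mul_pow, mul_pow]
          ring
      _ ≤ _ := by
          gcongr
          exact le_add_of_nonneg_left (by positivity)

lemma rpow_neg_half_mul_exp_le_inv_norm_mul_sin_angle_pow
    [NormedAddCommGroup V] [InnerProductSpace ℝ V]
    (d : ℕ) {δ s : ℝ} (hδ : 0 < δ) (hs : 0 < s) {x y : V} (hr : 0 < ‖x‖ * sin (angle x y)) :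
    s ^ (-(d : ℝ) / 2) * exp (-(δ / s) * ‖(1 + s) • x - (1 - s) • y‖ ^ 2) ≤
      d ! * (√δ)⁻¹ ^ d * ((‖x‖ * sin (angle x y)) ^ d)⁻¹ := by
  have hQ := sq_norm_mul_sin_angle_le x y (a := 1 + s) (by rw [abs_of_pos (by linarith)]; linarith)
    (1 - s)
  calc _ ≤ d ! * (√δ * (‖x‖ * sin (angle x y)))⁻¹ ^ d :=
        rpow_neg_half_mul_exp_le_of_sq_le hs hδ hr hQ
    _ = _ := by rw [mul_inv, mul_pow, inv_pow (_ * _)]; ring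

end PointwiseBounds

section Coordinates

variable {d : ℕ}

lemma nrm_eq_norm (x : Fin d → ℝ) : nrm x = ‖WithLp.toLp 2 x‖ := by
  simp [nrm, nrm2, EuclideanSpace.norm_eq]

lemma Qform_eq_norm_sq (s : ℝ) (x y : Fin d → ℝ) :
    Qform s x y = ‖(1 + s) • WithLp.toLp 2 x - (1 - s) • WithLp.toLp 2 y‖ ^ 2 := by
  rw [EuclideanSpace.norm_eq, sq_sqrt (by positivity)]
  simp [Qform]

lemma sinAngle_eq_sin_angle (x y : Fin d → ℝ) :
    sinAngle x y = sin (angle (WithLp.toLp 2 x) (WithLp.toLp 2 y)) := by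
  simp [sinAngle, angle, nrm_eq_norm, PiLp.inner_apply, mul_comm]

lemma mem_globalRegion_one_iff (x y : Fin d → ℝ) :
    (x, y) ∈ globalRegion d 1 ↔
      1 < ‖WithLp.toLp 2 x - WithLp.toLp 2 y‖ ∨
        1 < ‖WithLp.toLp 2 x - WithLp.toLp 2 y‖ * ‖WithLp.toLp 2 x + WithLp.toLp 2 y‖ := by
  simp only [globalRegion, localRegion, Set.mem_compl_iff, Set.mem_ofPred_eq, not_and_or, not_le,
    nrm_eq_norm, WithLp.toLp_sub, WithLp.toLp_add]

end Coordinates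

lemma ofReal_le_ofReal_mul_inv_ofReal_pow {a C r : ℝ} {d : ℕ} (hd : d ≠ 0) (hC : 0 < C)
    (hr : 0 ≤ r) (h : 0 < r → a ≤ C * (r ^ d)⁻¹) :
    ENNReal.ofReal a ≤ ENNReal.ofReal C * (ENNReal.ofReal r ^ d)⁻¹ := by
  rcases hr.eq_or_lt with rfl | hr
  · simp [hd, hC]
  · rw [← ENNReal.ofReal_pow hr.le, ← ENNReal.ofReal_inv_of_pos (by positivity),
      ← ENNReal.ofReal_mul hC.le]
    exact ENNReal.ofReal_le_ofReal (h hr)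

/-- For every `δ > 0` there exists `C > 0` such that, on the global region `G₁` (for
`x ≠ 0 ≠ y`),  `sup_{0<s<1} s^{-d/2} e^{-(δ/s) Q_s(x,y)} ≤ C min{(1+|x|)^d, (|x| sin θ(x,y))^{-d}}`.
The minimum is computed in `ℝ≥0∞` so that `(|x| sin θ(x,y))^{-d} = ∞` when `sin θ(x,y) = 0`. -/
theorem statement8 (d : ℕ) (hd : 1 ≤ d) (δ : ℝ) (hδ : 0 < δ) :
    ∃ C > 0, ∀ x y : Fin d → ℝ, (x, y) ∈ globalRegion d 1 → x ≠ 0 → y ≠ 0 →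
      ∀ s : ℝ, s ∈ Set.Ioo (0:ℝ) 1 →
        ENNReal.ofReal (s ^ (-(d : ℝ)/2) * Real.exp (-(δ/s) * Qform s x y)) ≤
          ENNReal.ofReal C *
            min (ENNReal.ofReal ((1 + nrm x) ^ d))
              ((ENNReal.ofReal (nrm x * sinAngle x y)) ^ d)⁻¹ := by
  have hC : 0 < √8 ^ d + d ! * (4 / √δ) ^ d := by positivity
  refine ⟨_, hC, fun x y hG _ _ s hs => ?_⟩
  rw [mem_globalRegion_one_iff] at hG
  rw [Qform_eq_norm_sq, sinAngle_eq_sin_angle, nrm_eq_norm, ← min_mul_mul_left]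
  refine le_min ?_ (ofReal_le_ofReal_mul_inv_ofReal_pow (by omega) hC
    (mul_nonneg (norm_nonneg _) (sin_angle_nonneg _ _)) fun hr => ?_)
  · rw [← ENNReal.ofReal_mul hC.le]
    exact ENNReal.ofReal_le_ofReal (rpow_neg_half_mul_exp_le_one_add_norm_pow d hδ hs.1 hG)
  · have h4 : (√δ)⁻¹ ≤ 4 / √δ := by
      rw [div_eq_mul_inv]
      exact le_mul_of_one_le_left (by positivity) (by norm_num)
    refine (rpow_neg_half_mul_exp_le_inv_norm_mul_sin_angle_pow d hδ hs.1 hr).trans ?_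
    gcongr
    exact le_add_of_nonneg_of_le (by positivity) (by gcongr)
end
end

section
/- Let k ∈ ℕ and ρ > 2. There exists C > 0 such that for every a > 0, the function F_a(t) = t^{k+1} ∂_t^k ( t e^{−t²/(4a)} ) satisfies: (i) sup_{t>0} |F_a(t)| ≤ C a; (ii) ( ∫₀^∞ |F_a(t)|² dt/t )^{1/2} ≤ C a; (iii) V_ρ(F_a) ≤ C a. -/
/-!
Substituting `s = √a · u` gives `F_a(t) = a · F_1(t / √a)`, and all three quantities scale
exactly like `a` under `t ↦ t / √a`. Now `F_1` is a polynomial times `e^{-u²/4}` vanishing at `0`,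
so `F_1'` is integrable: `∫₀^∞ |F_1'|` bounds `sup |F_1|` as well as the total variation of `F_1`,
which dominates its `ρ`-variation for `ρ ≥ 1`; and `F_1(u)² / u` is again a polynomial times a
Gaussian, hence integrable.
-/

open MeasureTheory Matrix
open scoped ENNReal

noncomputable section

/-- The `ρ`-variation of a function `g` on `(0,∞)`:
the supremum over all finite decreasing sequences `t₁ > t₂ > … > t_ℓ > 0` of
`(Σ ‖g(t_{n+1}) - g(t_n)‖^ρ)^{1/ρ}`. -/
def varOp {E : Type*} [NormedAddCommGroup E] (ρ : ℝ) (g : ℝ → E) : ℝ≥0∞ :=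
  ⨆ (ℓ : ℕ) (t : Fin (ℓ+1) → ℝ) (_ : StrictAnti t) (_ : ∀ i, 0 < t i),
    ENNReal.ofReal ((∑ n : Fin ℓ, ‖g (t n.succ) - g (t n.castSucc)‖ ^ ρ) ^ (1/ρ))

/-- The function `F_a(t) = t^{k+1} ∂_t^k (t e^{-t²/(4a)})`. -/
def Fsubord (k : ℕ) (a : ℝ) (t : ℝ) : ℝ :=
  t ^ (k+1) * iteratedDeriv k (fun s => s * Real.exp (-(s^2)/(4*a))) t

open Real Set Polynomial

lemma rpow_sum_rpow_le_sum {ι : Type*} (s : Finset ι) {x : ι → ℝ} (hx : ∀ i, 0 ≤ x i)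
    {p : ℝ} (hp : 1 ≤ p) : (∑ i ∈ s, x i ^ p) ^ (1 / p) ≤ ∑ i ∈ s, x i := by
  classical
  have hsum : ∑ i ∈ s, x i ^ p ≤ (∑ i ∈ s, x i) ^ p := by
    induction s using Finset.induction_on with
    | empty => simp [Real.zero_rpow (by linarith : p ≠ 0)]
    | insert i s hi ih =>
      rw [Finset.sum_insert hi, Finset.sum_insert hi]
      exact (add_le_add_right ih _).trans
        (Real.add_rpow_le_rpow_add (hx i) (Finset.sum_nonneg fun j _ => hx j) hp)
  calc (∑ i ∈ s, x i ^ p) ^ (1 / p) ≤ ((∑ i ∈ s, x i) ^ p) ^ (1 / p) :=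
        Real.rpow_le_rpow (Finset.sum_nonneg fun i _ => Real.rpow_nonneg (hx i) p) hsum
          (by positivity)
    _ = ∑ i ∈ s, x i := by
        rw [one_div, Real.rpow_rpow_inv (Finset.sum_nonneg fun i _ => hx i) (by positivity)]

lemma Fin.sum_castSucc_sub_succ {M : Type*} [AddCommGroup M] {n : ℕ} (g : Fin (n + 1) → M) :
    ∑ i : Fin n, (g i.castSucc - g i.succ) = g 0 - g (Fin.last n) := by
  induction n with
  | zero => simp
  | succ n ih =>
    rw [Fin.sum_univ_castSucc]
    simp only [Fin.succ_castSucc]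
    rw [ih (fun i => g i.castSucc)]
    simp

lemma varOp_comp_div_le (f : ℝ → ℝ) {a c ρ : ℝ} (ha : 0 ≤ a) (hc : 0 < c) (hρ : 0 < ρ) :
    varOp ρ (fun t => a * f (t / c)) ≤ ENNReal.ofReal a * varOp ρ f := by
  refine iSup_le fun ℓ => iSup_le fun t => iSup_le fun hanti => iSup_le fun hpos => ?_
  have hu_anti : StrictAnti fun i => t i / c :=
    fun i j hij => div_lt_div_of_pos_right (hanti hij) hc
  have hu_pos : ∀ i, 0 < t i / c := fun i => div_pos (hpos i) hc
  have hS : 0 ≤ ∑ n : Fin ℓ, ‖f (t n.succ / c) - f (t n.castSucc / c)‖ ^ ρ :=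
    Finset.sum_nonneg fun n _ => by positivity
  have hscale : (∑ n : Fin ℓ, ‖a * f (t n.succ / c) - a * f (t n.castSucc / c)‖ ^ ρ) ^ (1 / ρ)
      = a * (∑ n : Fin ℓ, ‖f (t n.succ / c) - f (t n.castSucc / c)‖ ^ ρ) ^ (1 / ρ) := by
    simp_rw [← mul_sub, norm_mul, Real.norm_of_nonneg ha, Real.mul_rpow ha (norm_nonneg _)]
    rw [← Finset.mul_sum, Real.mul_rpow (by positivity) hS, one_div, Real.rpow_rpow_inv ha hρ.ne']
  rw [hscale, ENNReal.ofReal_mul ha]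
  gcongr
  exact le_iSup_of_le ℓ <| le_iSup_of_le (fun i => t i / c) <| le_iSup_of_le hu_anti <|
    le_iSup_of_le hu_pos le_rfl

lemma abs_sub_le_integral_abs_deriv {f f' : ℝ → ℝ} (hf : ∀ x, HasDerivAt f (f' x) x)
    (hf' : Integrable f') {s t : ℝ} (hst : s ≤ t) :
    |f t - f s| ≤ ∫ x in s..t, |f' x| := by
  rw [← intervalIntegral.integral_eq_sub_of_hasDerivAt (fun x _ => hf x) hf'.intervalIntegrable]
  exact intervalIntegral.abs_integral_le_integral_abs hst

lemma intervalIntegral_le_setIntegral_Ioi {g : ℝ → ℝ} (hg : Integrable g) (hg0 : ∀ x, 0 ≤ g x)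
    {s t : ℝ} (hs : 0 ≤ s) (hst : s ≤ t) : ∫ x in s..t, g x ≤ ∫ x in Ioi 0, g x := by
  rw [intervalIntegral.integral_of_le hst]
  exact setIntegral_mono_set hg.integrableOn (.of_forall hg0)
    (Ioc_subset_Ioi_self.trans (Ioi_subset_Ioi hs)).eventuallyLE

lemma abs_le_integral_abs_deriv_of_eq_zero {f f' : ℝ → ℝ} (hf : ∀ x, HasDerivAt f (f' x) x)
    (hf' : Integrable f') (h0 : f 0 = 0) {u : ℝ} (hu : 0 ≤ u) :
    |f u| ≤ ∫ x in Ioi 0, |f' x| := by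
  simpa [h0] using (abs_sub_le_integral_abs_deriv hf hf' hu).trans
    (intervalIntegral_le_setIntegral_Ioi hf'.abs (fun x => abs_nonneg _) le_rfl hu)

lemma varOp_le_integral_abs_deriv {f f' : ℝ → ℝ} {ρ : ℝ} (hρ : 1 ≤ ρ)
    (hf : ∀ x, HasDerivAt f (f' x) x) (hf' : Integrable f') :
    varOp ρ f ≤ ENNReal.ofReal (∫ x in Ioi 0, |f' x|) := by
  refine iSup_le fun ℓ => iSup_le fun t => iSup_le fun hanti => iSup_le fun hpos => ?_
  refine ENNReal.ofReal_le_ofReal ?_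
  set Φ : ℝ → ℝ := fun x => ∫ y in 0..x, |f' y|
  have hint : ∀ a b, IntervalIntegrable (fun y => |f' y|) volume a b :=
    fun a b => hf'.abs.intervalIntegrable
  have hstep : ∀ n : Fin ℓ, ‖f (t n.succ) - f (t n.castSucc)‖
      ≤ Φ (t n.castSucc) - Φ (t n.succ) := by
    intro n
    rw [Real.norm_eq_abs, abs_sub_comm, intervalIntegral.integral_interval_sub_left (hint _ _)
      (hint _ _)]
    exact abs_sub_le_integral_abs_deriv hf hf' (hanti (Fin.castSucc_lt_succ (i := n))).le
  calc (∑ n : Fin ℓ, ‖f (t n.succ) - f (t n.castSucc)‖ ^ ρ) ^ (1 / ρ)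
      ≤ ∑ n : Fin ℓ, ‖f (t n.succ) - f (t n.castSucc)‖ :=
        rpow_sum_rpow_le_sum _ (fun n => norm_nonneg _) hρ
    _ ≤ ∑ n : Fin ℓ, (Φ (t n.castSucc) - Φ (t n.succ)) := Finset.sum_le_sum fun n _ => hstep n
    _ = Φ (t 0) - Φ (t (Fin.last ℓ)) := Fin.sum_castSucc_sub_succ (Φ ∘ t)
    _ ≤ Φ (t 0) := sub_le_self _ <|
        intervalIntegral.integral_nonneg (hpos _).le fun y _ => abs_nonneg _
    _ ≤ ∫ x in Ioi 0, |f' x| :=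
        intervalIntegral_le_setIntegral_Ioi hf'.abs (fun x => abs_nonneg _) le_rfl (hpos 0).le

lemma hasDerivAt_eval_mul_exp_neg_mul_sq (P : ℝ[X]) (b x : ℝ) :
    HasDerivAt (fun x => P.eval x * exp (-b * x ^ 2))
      ((derivative P - C (2 * b) * X * P).eval x * exp (-b * x ^ 2)) x := by
  refine ((P.hasDerivAt x).mul (((hasDerivAt_pow 2 x).const_mul (-b)).exp)).congr_deriv ?_
  simp only [eval_sub, eval_mul, eval_C, eval_X]
  ring

lemma exists_iteratedDeriv_mul_exp_neg_mul_sq (b : ℝ) (k : ℕ) : ∃ P : ℝ[X],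
    iteratedDeriv k (fun x => x * exp (-b * x ^ 2)) = fun x => P.eval x * exp (-b * x ^ 2) := by
  induction k with
  | zero => exact ⟨X, by simp⟩
  | succ k ih =>
    obtain ⟨P, hP⟩ := ih
    refine ⟨derivative P - C (2 * b) * X * P, ?_⟩
    rw [iteratedDeriv_succ, hP]
    exact funext fun x => (hasDerivAt_eval_mul_exp_neg_mul_sq P b x).deriv

lemma integrable_eval_mul_exp_neg_mul_sq {b : ℝ} (hb : 0 < b) (P : ℝ[X]) :
    Integrable fun x => P.eval x * exp (-b * x ^ 2) := by
  simp_rw [eval_eq_sum_range, Finset.sum_mul]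
  refine integrable_finsetSum _ fun i _ => ?_
  have hi : (-1 : ℝ) < i := by linarith [i.cast_nonneg (α := ℝ)]
  simpa only [Real.rpow_natCast, mul_assoc] using
    (integrable_rpow_mul_exp_neg_mul_sq hb hi).const_mul (P.coeff i)

lemma Fsubord_eq_mul_Fsubord_one (k : ℕ) {a : ℝ} (ha : 0 < a) (t : ℝ) :
    Fsubord k a t = a * Fsubord k 1 (t / √a) := by
  have hc : 0 < √a := Real.sqrt_pos.2 ha
  rw [Fsubord, Fsubord]
  set g : ℝ → ℝ := fun u => u * exp (-(u ^ 2) / (4 * 1))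
  have hg : (fun s => s * exp (-(s ^ 2) / (4 * a))) = fun s => √a * g ((√a)⁻¹ * s) := by
    funext s
    simp only [g, mul_pow, inv_pow, Real.sq_sqrt ha.le]
    field_simp
  rw [hg, iteratedDeriv_const_mul_field, iteratedDeriv_comp_const_mul (by fun_prop),
    div_eq_inv_mul, mul_pow]
  -- every `a` becomes `√a ^ 2`, including the one under `√`, which `sqrt_sq` restores
  rw [← Real.sq_sqrt ha.le, Real.sqrt_sq hc.le]
  field_simp
  rw [pow_succ (1 / √a) k]
  field_simp

lemma exists_Fsubord_one_eq (k : ℕ) :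
    ∃ q : ℝ[X], ∀ u, Fsubord k 1 u = u ^ (k + 1) * q.eval u * exp (-(1 / 4) * u ^ 2) := by
  obtain ⟨q, hq⟩ := exists_iteratedDeriv_mul_exp_neg_mul_sq (1 / 4) k
  have hg : (fun s => s * exp (-(s ^ 2) / (4 * 1))) = fun s => s * exp (-(1 / 4) * s ^ 2) := by
    funext s
    ring_nf
  exact ⟨q, fun u => by rw [Fsubord, hg, hq, mul_assoc]⟩

lemma exists_hasDerivAt_Fsubord_one (k : ℕ) :
    ∃ f' : ℝ → ℝ, (∀ x, HasDerivAt (Fsubord k 1) (f' x) x) ∧ Integrable f' := by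
  obtain ⟨q, hq⟩ := exists_Fsubord_one_eq k
  have hF : Fsubord k 1 = fun u => (X ^ (k + 1) * q).eval u * exp (-(1 / 4) * u ^ 2) :=
    funext fun u => by simp [hq]
  rw [hF]
  exact ⟨_, hasDerivAt_eval_mul_exp_neg_mul_sq _ _,
    integrable_eval_mul_exp_neg_mul_sq (by norm_num) _⟩

lemma integrable_Fsubord_one_sq_div (k : ℕ) : Integrable fun u => Fsubord k 1 u ^ 2 / u := by
  obtain ⟨q, hq⟩ := exists_Fsubord_one_eq k
  suffices h : (fun u => Fsubord k 1 u ^ 2 / u)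
      = fun u => (X ^ (2 * k + 1) * q ^ 2).eval u * exp (-(1 / 2) * u ^ 2) by
    rw [h]
    exact integrable_eval_mul_exp_neg_mul_sq (by norm_num) _
  funext u
  rcases eq_or_ne u 0 with rfl | hu
  · simp
  have he : exp (-(1 / 2) * u ^ 2) = exp (-(1 / 4) * u ^ 2) ^ 2 := by
    rw [← Real.exp_nat_mul]
    ring_nf
  rw [hq, he]
  simp only [eval_mul, eval_pow, eval_X]
  field_simp
  ring

lemma lintegral_Fsubord_sq_div (k : ℕ) {a : ℝ} (ha : 0 < a) :
    ∫⁻ t in Ioi 0, ENNReal.ofReal (Fsubord k a t ^ 2 / t)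
      = ENNReal.ofReal (a ^ 2 * ∫ u in Ioi 0, Fsubord k 1 u ^ 2 / u) := by
  set h : ℝ → ℝ := fun u => Fsubord k 1 u ^ 2 / u
  have hc : 0 < √a := Real.sqrt_pos.2 ha
  have hscale : ∀ t, Fsubord k a t ^ 2 / t = a ^ 2 / √a * h ((√a)⁻¹ * t) := by
    intro t
    simp only [h, Fsubord_eq_mul_Fsubord_one k ha, div_eq_inv_mul, mul_inv, inv_inv]
    field_simp
  simp_rw [hscale]
  rw [← ofReal_integral_eq_lintegral_ofReal, integral_const_mul,
    integral_comp_mul_left_Ioi h 0 (inv_pos.2 hc), mul_zero, inv_inv, smul_eq_mul]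
  · field_simp
  · exact ((integrable_Fsubord_one_sq_div k).comp_mul_left' (inv_ne_zero hc.ne')).const_mul _
      |>.integrableOn
  · filter_upwards [ae_restrict_mem measurableSet_Ioi] with t ht
    rw [← hscale]
    exact div_nonneg (sq_nonneg _) (le_of_lt ht)

/-- There exists `C > 0` such that, for every `a > 0`, the function
`F_a(t) = t^{k+1} ∂_t^k (t e^{-t²/(4a)})` satisfies `sup_{t>0}|F_a(t)| ≤ C a`,
`(∫₀^∞ |F_a(t)|² dt/t)^{1/2} ≤ C a` and `V_ρ(F_a) ≤ C a`. -/
theorem statement12 (k : ℕ) (ρ : ℝ) (hρ : 2 < ρ) :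
    ∃ C > 0, ∀ a : ℝ, 0 < a →
      (∀ t : ℝ, 0 < t → |Fsubord k a t| ≤ C * a) ∧
      (∫⁻ t in Set.Ioi (0:ℝ), ENNReal.ofReal ((Fsubord k a t) ^ 2 / t)) ^ ((1:ℝ)/2)
        ≤ ENNReal.ofReal (C * a) ∧
      varOp ρ (Fsubord k a) ≤ ENNReal.ofReal (C * a) := by
  obtain ⟨f', hf', hf'_int⟩ := exists_hasDerivAt_Fsubord_one k
  set V := ∫ x in Ioi 0, |f' x|
  set I := ∫ u in Ioi 0, Fsubord k 1 u ^ 2 / u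
  have hV : 0 ≤ V := setIntegral_nonneg measurableSet_Ioi fun x _ => abs_nonneg _
  have hI : 0 ≤ I :=
    setIntegral_nonneg measurableSet_Ioi fun u hu => div_nonneg (sq_nonneg _) (le_of_lt hu)
  refine ⟨V + √I + 1, by positivity, fun a ha => ⟨fun t ht => ?_, ?_, ?_⟩⟩
  · have hsup : |Fsubord k 1 (t / √a)| ≤ V :=
      abs_le_integral_abs_deriv_of_eq_zero hf' hf'_int (by simp [Fsubord])
        (div_nonneg ht.le (Real.sqrt_nonneg a))
    calc |Fsubord k a t| = a * |Fsubord k 1 (t / √a)| := by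
          rw [Fsubord_eq_mul_Fsubord_one k ha, abs_mul, abs_of_pos ha]
      _ ≤ (V + √I + 1) * a := by nlinarith [Real.sqrt_nonneg I]
  · rw [lintegral_Fsubord_sq_div k ha, ENNReal.ofReal_rpow_of_nonneg (by positivity) (by norm_num),
      ← Real.sqrt_eq_rpow, Real.sqrt_mul' _ hI, Real.sqrt_sq ha.le]
    exact ENNReal.ofReal_le_ofReal (by nlinarith)
  · calc varOp ρ (Fsubord k a) = varOp ρ (fun t => a * Fsubord k 1 (t / √a)) := by
          rw [← funext (Fsubord_eq_mul_Fsubord_one k ha)]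
      _ ≤ ENNReal.ofReal a * varOp ρ (Fsubord k 1) :=
          varOp_comp_div_le _ ha.le (Real.sqrt_pos.2 ha) (by linarith)
      _ ≤ ENNReal.ofReal a * ENNReal.ofReal V := by
          gcongr
          exact varOp_le_integral_abs_deriv (by linarith) hf' hf'_int
      _ ≤ ENNReal.ofReal ((V + √I + 1) * a) := by
          rw [← ENNReal.ofReal_mul ha.le]
          exact ENNReal.ofReal_le_ofReal (by nlinarith [Real.sqrt_nonneg I])
end
end

section
/- Let k ∈ ℕ, ρ > 2 and M > 1/2. There exists C > 0 such that for every a > 0, the function F_a(t) = t^{k+1/2} ∂_t^k ( t^{−M} e^{−a/t} ) satisfies: (i) sup_{t>0} |F_a(t)| ≤ C a^{1/2 − M}; (ii) ( ∫₀^∞ |F_a(t)|² dt/t )^{1/2} ≤ C a^{1/2 − M}; (iii) V_ρ(F_a) ≤ C a^{1/2 − M}. -/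
/-!
Induction on `k` gives `∂_t^k (t^{-M} e^{-a/t}) = t^{-M-k} P_k(a/t) e^{-a/t}` for a polynomial
`P_k` independent of `a`, hence the exact scaling `F_a(t) = a^{1/2-M} G(t/a)` with
`G(s) = s^{1/2-M} P_k(1/s) e^{-1/s}`. The sup norm, the `L²(dt/t)` norm and the `ρ`-variation are
homogeneous and invariant under the dilation `t ↦ t/a`, so it suffices that they are finite for
`G`. Expanding `P_k`, everything reduces to the monomials `s^γ e^{-1/s}`: they are bounded for
`γ ≤ 0` and integrable on `(0,∞)` for `γ < -1`, since `e^{-1/s}` beats every power at `0`. Thus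
`G` is bounded, `G(s)/s` and `G'(s)` are integrable, and the `ρ`-variation is at most the
`1`-variation, which is at most `∫ |G'|`.
-/

open MeasureTheory Matrix
open scoped ENNReal

noncomputable section

/-- The function `F_a(t) = t^{k+1/2} ∂_t^k (t^{-M} e^{-a/t})`. -/
def Fresol (k : ℕ) (M : ℝ) (a : ℝ) (t : ℝ) : ℝ :=
  t ^ ((k : ℝ) + 1/2) * iteratedDeriv k (fun s => s ^ (-M) * Real.exp (-a/s)) t

open Polynomial Set

lemma Real.sum_rpow_le_rpow_sum {ι : Type*} (s : Finset ι) {f : ι → ℝ} (hf : ∀ i ∈ s, 0 ≤ f i)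
    {p : ℝ} (hp : 1 ≤ p) : ∑ i ∈ s, f i ^ p ≤ (∑ i ∈ s, f i) ^ p := by
  induction s using Finset.cons_induction with
  | empty => simp [Real.zero_rpow (by linarith : p ≠ 0)]
  | cons i s hi ih =>
    rw [Finset.forall_mem_cons] at hf
    rw [Finset.sum_cons, Finset.sum_cons]
    calc f i ^ p + ∑ j ∈ s, f j ^ p ≤ f i ^ p + (∑ j ∈ s, f j) ^ p := by gcongr; exact ih hf.2
      _ ≤ (f i + ∑ j ∈ s, f j) ^ p :=
        Real.add_rpow_le_rpow_add hf.1 (Finset.sum_nonneg hf.2) hp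

lemma Real.sum_rpow_rpow_one_div_le_sum {ι : Type*} (s : Finset ι) {f : ι → ℝ}
    (hf : ∀ i ∈ s, 0 ≤ f i) {p : ℝ} (hp : 1 ≤ p) :
    (∑ i ∈ s, f i ^ p) ^ (1 / p) ≤ ∑ i ∈ s, f i := by
  have hsum : 0 ≤ ∑ i ∈ s, f i := Finset.sum_nonneg hf
  calc (∑ i ∈ s, f i ^ p) ^ (1 / p) ≤ ((∑ i ∈ s, f i) ^ p) ^ (1 / p) :=
        Real.rpow_le_rpow (Finset.sum_nonneg fun i hi => Real.rpow_nonneg (hf i hi) p)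
          (Real.sum_rpow_le_rpow_sum s hf hp) (by positivity)
    _ = ∑ i ∈ s, f i := by rw [one_div, Real.rpow_rpow_inv hsum (by linarith)]

lemma Fin.sum_castSucc_sub_succ_s13 {G : Type*} [AddCommGroup G] {ℓ : ℕ} (φ : Fin (ℓ + 1) → G) :
    ∑ n : Fin ℓ, (φ n.castSucc - φ n.succ) = φ 0 - φ (Fin.last ℓ) := by
  induction ℓ with
  | zero => simp
  | succ ℓ ih =>
    have := ih (φ ∘ Fin.castSucc)
    simp only [Function.comp_apply, ← Fin.succ_castSucc] at this
    rw [Fin.sum_univ_castSucc, this, Fin.castSucc_zero, Fin.succ_last]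
    abel

section Variation

variable {E : Type*} [NormedAddCommGroup E] [NormedSpace ℝ E]

lemma varOp_le_of_eq_smul_comp_div {ρ a c : ℝ} (hρ : 0 < ρ) (ha : 0 < a) {f g : ℝ → E}
    (hfg : ∀ t, 0 < t → f t = c • g (t / a)) :
    varOp ρ f ≤ ENNReal.ofReal |c| * varOp ρ g := by
  refine iSup_le fun ℓ => iSup_le fun t => iSup_le fun ht_anti => iSup_le fun ht_pos => ?_
  have hs_anti : StrictAnti fun i => t i / a := fun i j hij =>
    div_lt_div_of_pos_right (ht_anti hij) ha
  have hs_pos : ∀ i, 0 < t i / a := fun i => div_pos (ht_pos i) ha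
  have hsum : (∑ n : Fin ℓ, ‖f (t n.succ) - f (t n.castSucc)‖ ^ ρ) ^ (1 / ρ)
      = |c| * (∑ n : Fin ℓ, ‖g (t n.succ / a) - g (t n.castSucc / a)‖ ^ ρ) ^ (1 / ρ) := by
    simp only [hfg _ (ht_pos _), ← smul_sub, norm_smul, Real.norm_eq_abs,
      Real.mul_rpow (abs_nonneg c) (norm_nonneg _), ← Finset.mul_sum]
    rw [Real.mul_rpow (by positivity) (Finset.sum_nonneg fun n _ => by positivity),
      ← Real.rpow_mul (abs_nonneg c), mul_one_div_cancel hρ.ne', Real.rpow_one]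
  rw [hsum, ENNReal.ofReal_mul (abs_nonneg c)]
  gcongr
  exact le_iSup_of_le ℓ <| le_iSup_of_le (fun i => t i / a) <| le_iSup_of_le hs_anti <|
    le_iSup_of_le hs_pos le_rfl

variable [CompleteSpace E]

lemma varOp_le_integral_norm_deriv {ρ : ℝ} (hρ : 1 ≤ ρ) {g g' : ℝ → E}
    (hg : ∀ t, 0 < t → HasDerivAt g (g' t) t) (hg' : IntegrableOn g' (Ioi 0)) :
    varOp ρ g ≤ ENNReal.ofReal (∫ t in Ioi 0, ‖g' t‖) := by
  refine iSup_le fun ℓ => iSup_le fun t => iSup_le fun ht_anti => iSup_le fun ht_pos =>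
    ENNReal.ofReal_le_ofReal ?_
  have hii : ∀ {s u : ℝ}, 0 ≤ s → s ≤ u → IntervalIntegrable g' volume s u := fun hs hsu =>
    (intervalIntegrable_iff_integrableOn_Ioc_of_le hsu).2
      (hg'.mono_set fun x hx => hs.trans_lt hx.1)
  set Φ : ℝ → ℝ := fun u => ∫ x in (0)..u, ‖g' x‖
  have hΦ : ∀ {s u : ℝ}, 0 < s → s ≤ u → ‖g u - g s‖ ≤ Φ u - Φ s := fun hs hsu => by
    rw [intervalIntegral.integral_interval_sub_left (hii le_rfl (hs.le.trans hsu)).norm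
      (hii le_rfl hs.le).norm, ← intervalIntegral.integral_eq_sub_of_hasDerivAt
        (fun x hx => hg x (hs.trans_le (uIcc_of_le hsu ▸ hx).1)) (hii hs.le hsu)]
    exact intervalIntegral.norm_integral_le_integral_norm hsu
  calc (∑ n : Fin ℓ, ‖g (t n.succ) - g (t n.castSucc)‖ ^ ρ) ^ (1 / ρ)
      ≤ ∑ n : Fin ℓ, ‖g (t n.succ) - g (t n.castSucc)‖ :=
        Real.sum_rpow_rpow_one_div_le_sum _ (fun n _ => norm_nonneg _) hρ
    _ ≤ ∑ n : Fin ℓ, (Φ (t n.castSucc) - Φ (t n.succ)) := Finset.sum_le_sum fun n _ => by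
        rw [norm_sub_rev]
        exact hΦ (ht_pos _) (ht_anti Fin.castSucc_lt_succ).le
    _ = Φ (t 0) - Φ (t (Fin.last ℓ)) := Fin.sum_castSucc_sub_succ_s13 fun i => Φ (t i)
    _ ≤ Φ (t 0) := sub_le_self _
        (intervalIntegral.integral_nonneg (ht_pos _).le fun _ _ => norm_nonneg _)
    _ ≤ ∫ x in Ioi 0, ‖g' x‖ := by
        simp only [Φ, intervalIntegral.integral_of_le (ht_pos 0).le]
        exact setIntegral_mono_set hg'.norm (Filter.Eventually.of_forall fun _ => norm_nonneg _)
          Ioc_subset_Ioi_self.eventuallyLE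

end Variation

lemma lintegral_sq_div_of_eq_mul_comp_div {a c : ℝ} (ha : 0 < a) {f g : ℝ → ℝ}
    (hfg : ∀ t, 0 < t → f t = c * g (t / a)) :
    ∫⁻ t in Ioi 0, ENNReal.ofReal (f t ^ 2 / t)
      = ENNReal.ofReal (c ^ 2) * ∫⁻ u in Ioi 0, ENNReal.ofReal (g u ^ 2 / u) := by
  have himage : (fun u => a * u) '' Ioi 0 = Ioi 0 := by
    rw [Set.image_mul_left_Ioi ha, mul_zero]
  conv_lhs => rw [← himage]
  rw [lintegral_image_eq_lintegral_abs_deriv_mul measurableSet_Ioi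
      (fun x _ => ((hasDerivAt_id' x).const_mul a).hasDerivWithinAt)
      (mul_right_injective₀ ha.ne').injOn, ← lintegral_const_mul' _ _ ENNReal.ofReal_ne_top]
  refine setLIntegral_congr_fun measurableSet_Ioi fun u (hu : 0 < u) => ?_
  rw [hfg _ (mul_pos ha hu), mul_div_cancel_left₀ _ ha.ne', mul_one, abs_of_pos ha,
    ← ENNReal.ofReal_mul ha.le, ← ENNReal.ofReal_mul (sq_nonneg c)]
  congr 1
  field_simp

def SupL2VarLE (ρ : ℝ) (g : ℝ → ℝ) (C : ℝ) : Prop :=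
  (∀ t : ℝ, 0 < t → |g t| ≤ C) ∧
    (∫⁻ t in Ioi 0, ENNReal.ofReal (g t ^ 2 / t)) ^ (1 / 2 : ℝ) ≤ ENNReal.ofReal C ∧
    varOp ρ g ≤ ENNReal.ofReal C

lemma SupL2VarLE.of_eq_mul_comp_div {ρ a c C : ℝ} {f g : ℝ → ℝ} (hg : SupL2VarLE ρ g C)
    (hρ : 0 < ρ) (ha : 0 < a) (hc : 0 ≤ c) (hfg : ∀ t, 0 < t → f t = c * g (t / a)) :
    SupL2VarLE ρ f (C * c) := by
  obtain ⟨hsup, hL2, hvar⟩ := hg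
  refine ⟨fun t ht => ?_, ?_, ?_⟩
  · rw [hfg t ht, abs_mul, abs_of_nonneg hc, mul_comm]
    gcongr
    exact hsup _ (div_pos ht ha)
  · rw [lintegral_sq_div_of_eq_mul_comp_div ha hfg, ENNReal.mul_rpow_of_nonneg _ _ (by norm_num),
      ENNReal.ofReal_rpow_of_nonneg (sq_nonneg _) (by norm_num), ← Real.sqrt_eq_rpow,
      Real.sqrt_sq hc, mul_comm C, ENNReal.ofReal_mul hc]
    gcongr
  · calc varOp ρ f ≤ ENNReal.ofReal |c| * varOp ρ g := varOp_le_of_eq_smul_comp_div hρ ha hfg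
      _ ≤ ENNReal.ofReal (C * c) := by
        rw [abs_of_nonneg hc, mul_comm C, ENNReal.ofReal_mul hc]
        gcongr

def rpowPolyExp (γ : ℝ) (P : ℝ[X]) (a t : ℝ) : ℝ :=
  t ^ γ * P.eval (a / t) * Real.exp (-a / t)

def rpowPolyExpDeriv (γ : ℝ) (P : ℝ[X]) : ℝ[X] :=
  C γ * P + X * (P - derivative P)

lemma hasDerivAt_rpowPolyExp (γ : ℝ) (P : ℝ[X]) (a : ℝ) {t : ℝ} (ht : 0 < t) :
    HasDerivAt (rpowPolyExp γ P a) (rpowPolyExp (γ - 1) (rpowPolyExpDeriv γ P) a t) t := by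
  have hq : HasDerivAt (fun s => a / s) (-(a / t ^ 2)) t := by
    simpa [div_eq_mul_inv, neg_div] using (hasDerivAt_inv ht.ne').const_mul a
  have hexp : HasDerivAt (fun s => Real.exp (-a / s)) (a / t ^ 2 * Real.exp (-a / t)) t := by
    simpa only [neg_div, neg_neg, mul_comm] using hq.fun_neg.exp
  refine (((Real.hasDerivAt_rpow_const (p := γ) (Or.inl ht.ne')).fun_mul
    ((P.hasDerivAt (a / t)).comp t hq)).fun_mul hexp).congr_deriv ?_
  simp only [rpowPolyExp, rpowPolyExpDeriv, eval_add, eval_mul, eval_C, eval_X, eval_sub,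
    Function.comp_apply, Real.rpow_sub ht, Real.rpow_one]
  field_simp
  ring

def iterDerivPoly (M : ℝ) : ℕ → ℝ[X]
  | 0 => 1
  | k + 1 => rpowPolyExpDeriv (-M - k) (iterDerivPoly M k)

lemma iteratedDeriv_rpow_mul_exp_eq_rpowPolyExp (M a : ℝ) (k : ℕ) {t : ℝ} (ht : 0 < t) :
    iteratedDeriv k (fun s => s ^ (-M) * Real.exp (-a / s)) t
      = rpowPolyExp (-M - k) (iterDerivPoly M k) a t := by
  induction k generalizing t with
  | zero => simp [rpowPolyExp, iterDerivPoly]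
  | succ k ih =>
    rw [iteratedDeriv_succ]
    have hev : iteratedDeriv k (fun s => s ^ (-M) * Real.exp (-a / s))
        =ᶠ[nhds t] rpowPolyExp (-M - k) (iterDerivPoly M k) a :=
      Filter.eventually_of_mem (Ioi_mem_nhds ht) fun s hs => ih hs
    rw [hev.deriv_eq, (hasDerivAt_rpowPolyExp _ _ a ht).deriv, iterDerivPoly]
    push_cast
    ring_nf

lemma Fresol_eq_rpowPolyExp (k : ℕ) (M a : ℝ) {t : ℝ} (ht : 0 < t) :
    Fresol k M a t = rpowPolyExp (1 / 2 - M) (iterDerivPoly M k) a t := by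
  rw [Fresol, iteratedDeriv_rpow_mul_exp_eq_rpowPolyExp M a k ht, rpowPolyExp, rpowPolyExp,
    ← mul_assoc, ← mul_assoc, ← Real.rpow_add ht]
  ring_nf

lemma rpowPolyExp_eq_mul_rpowPolyExp_one (γ : ℝ) (P : ℝ[X]) {a t : ℝ} (ha : 0 < a)
    (ht : 0 < t) : rpowPolyExp γ P a t = a ^ γ * rpowPolyExp γ P 1 (t / a) := by
  simp only [rpowPolyExp, Real.div_rpow ht.le ha.le, neg_div, div_div_eq_mul_div, one_mul]
  field_simp

lemma continuousOn_rpowPolyExp (γ : ℝ) (P : ℝ[X]) (a : ℝ) :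
    ContinuousOn (rpowPolyExp γ P a) (Ioi 0) := fun _ ht =>
  (hasDerivAt_rpowPolyExp γ P a ht).continuousAt.continuousWithinAt

lemma exp_neg_one_div_le_one {t : ℝ} (ht : 0 ≤ t) : Real.exp (-1 / t) ≤ 1 :=
  Real.exp_le_one_iff.2 (by rw [neg_div]; exact neg_nonpos.2 (by positivity))

lemma rpowPolyExp_one_eq_sum (γ : ℝ) (P : ℝ[X]) {t : ℝ} (ht : 0 < t) :
    rpowPolyExp γ P 1 t
      = ∑ i ∈ Finset.range (P.natDegree + 1), P.coeff i * (t ^ (γ - i) * Real.exp (-1 / t)) := by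
  rw [rpowPolyExp, eval_eq_sum_range, Finset.mul_sum, Finset.sum_mul]
  refine Finset.sum_congr rfl fun i _ => ?_
  rw [Real.rpow_sub ht, Real.rpow_natCast, div_pow, one_pow]
  field_simp

/-- For `t ≤ 1` this is `x^{-γ} e^{-x} ≤ x^n e^{-x} ≤ n!` with `x = 1/t`. -/
lemma rpow_mul_exp_neg_one_div_le_factorial {γ t : ℝ} (hγ : γ ≤ 0) (ht : 0 < t) :
    t ^ γ * Real.exp (-1 / t) ≤ (⌈-γ⌉₊).factorial := by
  set n := ⌈-γ⌉₊
  have hn : (1 : ℝ) ≤ n.factorial := mod_cast n.factorial_pos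
  rcases le_total 1 t with h1 | h1
  · calc t ^ γ * Real.exp (-1 / t) ≤ 1 * 1 := by
          gcongr
          · exact Real.rpow_le_one_of_one_le_of_nonpos h1 hγ
          · exact exp_neg_one_div_le_one ht.le
      _ ≤ n.factorial := by linarith
  · have hpow : t ^ γ ≤ (1 / t) ^ n := by
      rw [one_div, inv_pow, ← Real.rpow_natCast, ← Real.rpow_neg ht.le]
      exact Real.rpow_le_rpow_of_exponent_ge ht h1 (by linarith [Nat.le_ceil (-γ)])
    have hexp := Real.pow_div_factorial_le_exp (1 / t) (by positivity) n
    rw [div_le_iff₀ (by positivity)] at hexp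
    calc t ^ γ * Real.exp (-1 / t) ≤ (1 / t) ^ n * Real.exp (-1 / t) := by gcongr
      _ ≤ Real.exp (1 / t) * n.factorial * Real.exp (-1 / t) := by gcongr
      _ = n.factorial := by
        rw [mul_comm, ← mul_assoc, neg_div, ← Real.exp_add, neg_add_cancel, Real.exp_zero,
          one_mul]

lemma integrableOn_rpow_mul_exp_neg_one_div {γ : ℝ} (hγ : γ < -1) :
    IntegrableOn (fun t => t ^ γ * Real.exp (-1 / t)) (Ioi 0) := by
  have hcont : ContinuousOn (fun t : ℝ => t ^ γ * Real.exp (-1 / t)) (Ioi 0) := by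
    refine (continuousOn_rpowPolyExp γ 1 1).congr fun t _ => ?_
    simp [rpowPolyExp]
  rw [← Ioc_union_Ioi_eq_Ioi zero_le_one]
  refine IntegrableOn.union ?_ ?_
  · refine IntegrableOn.of_bound measure_Ioc_lt_top
      ((hcont.mono Ioc_subset_Ioi_self).aestronglyMeasurable measurableSet_Ioc)
      (⌈-γ⌉₊).factorial ?_
    refine (ae_restrict_iff' measurableSet_Ioc).2 (Filter.Eventually.of_forall fun t ht => ?_)
    rw [Real.norm_of_nonneg (by have := ht.1; positivity)]
    exact rpow_mul_exp_neg_one_div_le_factorial (by linarith) ht.1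
  · refine (integrableOn_Ioi_rpow_of_lt hγ zero_lt_one).mono'
      ((hcont.mono (Ioi_subset_Ioi zero_le_one)).aestronglyMeasurable measurableSet_Ioi) ?_
    refine (ae_restrict_iff' measurableSet_Ioi).2 (Filter.Eventually.of_forall fun t ht => ?_)
    have ht0 : (0 : ℝ) < t := zero_lt_one.trans ht
    rw [Real.norm_of_nonneg (by positivity)]
    exact mul_le_of_le_one_right (by positivity) (exp_neg_one_div_le_one ht0.le)

lemma exists_abs_rpowPolyExp_one_le {γ : ℝ} (hγ : γ ≤ 0) (P : ℝ[X]) :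
    ∃ B, ∀ t, 0 < t → |rpowPolyExp γ P 1 t| ≤ B := by
  refine ⟨∑ i ∈ Finset.range (P.natDegree + 1), |P.coeff i| * (⌈-(γ - i)⌉₊).factorial,
    fun t ht => ?_⟩
  rw [rpowPolyExp_one_eq_sum γ P ht]
  refine (Finset.abs_sum_le_sum_abs _ _).trans (Finset.sum_le_sum fun i _ => ?_)
  rw [abs_mul, abs_of_nonneg (mul_nonneg (Real.rpow_nonneg ht.le _) (Real.exp_pos _).le)]
  gcongr
  exact rpow_mul_exp_neg_one_div_le_factorial (by linarith [i.cast_nonneg (α := ℝ)]) ht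

lemma integrableOn_rpowPolyExp_one {γ : ℝ} (hγ : γ < -1) (P : ℝ[X]) :
    IntegrableOn (rpowPolyExp γ P 1) (Ioi 0) := by
  refine (integrableOn_congr_fun (fun t (ht : t ∈ Ioi 0) => (rpowPolyExp_one_eq_sum γ P ht).symm)
    measurableSet_Ioi).1 ?_
  refine integrable_finsetSum _ fun i _ => (integrableOn_rpow_mul_exp_neg_one_div ?_).const_mul _
  linarith [i.cast_nonneg (α := ℝ)]

lemma lintegral_rpowPolyExp_one_sq_div_lt_top {γ : ℝ} (hγ : γ < 0) (P : ℝ[X]) :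
    ∫⁻ t in Ioi 0, ENNReal.ofReal (rpowPolyExp γ P 1 t ^ 2 / t) < ∞ := by
  obtain ⟨B, hB⟩ := exists_abs_rpowPolyExp_one_le hγ.le P
  have hdiv : ∀ t ∈ Ioi (0 : ℝ), rpowPolyExp γ P 1 t * rpowPolyExp (γ - 1) P 1 t
      = rpowPolyExp γ P 1 t ^ 2 / t := fun t (ht : 0 < t) => by
    simp only [rpowPolyExp, Real.rpow_sub_one ht.ne']
    field_simp
  have hint : IntegrableOn (fun t => rpowPolyExp γ P 1 t * rpowPolyExp (γ - 1) P 1 t) (Ioi 0) :=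
    (integrableOn_rpowPolyExp_one (by linarith) P).bdd_mul
      ((continuousOn_rpowPolyExp γ P 1).aestronglyMeasurable measurableSet_Ioi)
      ((ae_restrict_iff' measurableSet_Ioi).2 (Filter.Eventually.of_forall fun t ht => hB t ht))
  rw [← setLIntegral_congr_fun measurableSet_Ioi fun t ht => congrArg ENNReal.ofReal (hdiv t ht)]
  exact hint.lintegral_lt_top

lemma varOp_rpowPolyExp_one_lt_top {ρ γ : ℝ} (hρ : 1 ≤ ρ) (hγ : γ < 0) (P : ℝ[X]) :
    varOp ρ (rpowPolyExp γ P 1) < ∞ :=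
  (varOp_le_integral_norm_deriv hρ (fun _ ht => hasDerivAt_rpowPolyExp γ P 1 ht)
    (integrableOn_rpowPolyExp_one (by linarith) _)).trans_lt ENNReal.ofReal_lt_top

lemma exists_supL2VarLE_rpowPolyExp_one {ρ γ : ℝ} (hρ : 1 ≤ ρ) (hγ : γ < 0) (P : ℝ[X]) :
    ∃ C > 0, SupL2VarLE ρ (rpowPolyExp γ P 1) C := by
  obtain ⟨B, hB⟩ := exists_abs_rpowPolyExp_one_le hγ.le P
  set L := (∫⁻ t in Ioi 0, ENNReal.ofReal (rpowPolyExp γ P 1 t ^ 2 / t)) ^ (1 / 2 : ℝ)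
  have hL : L ≠ ∞ := (ENNReal.rpow_lt_top_of_nonneg (by norm_num)
    (lintegral_rpowPolyExp_one_sq_div_lt_top hγ P).ne).ne
  set V := varOp ρ (rpowPolyExp γ P 1)
  have hV : V ≠ ∞ := (varOp_rpowPolyExp_one_lt_top hρ hγ P).ne
  have hL0 : 0 ≤ L.toReal := ENNReal.toReal_nonneg
  have hV0 : 0 ≤ V.toReal := ENNReal.toReal_nonneg
  refine ⟨|B| + L.toReal + V.toReal + 1, by positivity, fun t ht => ?_, ?_, ?_⟩
  · linarith [hB t ht, le_abs_self B]
  · rw [ENNReal.le_ofReal_iff_toReal_le hL (by positivity)]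
    linarith [abs_nonneg B]
  · rw [ENNReal.le_ofReal_iff_toReal_le hV (by positivity)]
    linarith [abs_nonneg B]

/-- Let `M > 1/2`. There exists `C > 0` such that, for every `a > 0`, the function
`F_a(t) = t^{k+1/2} ∂_t^k (t^{-M} e^{-a/t})` satisfies `sup_{t>0}|F_a(t)| ≤ C a^{1/2-M}`,
`(∫₀^∞ |F_a(t)|² dt/t)^{1/2} ≤ C a^{1/2-M}` and `V_ρ(F_a) ≤ C a^{1/2-M}`. -/
theorem statement13 (k : ℕ) (ρ : ℝ) (hρ : 2 < ρ) (M : ℝ) (hM : 1/2 < M) :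
    ∃ C > 0, ∀ a : ℝ, 0 < a →
      (∀ t : ℝ, 0 < t → |Fresol k M a t| ≤ C * a ^ ((1:ℝ)/2 - M)) ∧
      (∫⁻ t in Set.Ioi (0:ℝ), ENNReal.ofReal ((Fresol k M a t) ^ 2 / t)) ^ ((1:ℝ)/2)
        ≤ ENNReal.ofReal (C * a ^ ((1:ℝ)/2 - M)) ∧
      varOp ρ (Fresol k M a) ≤ ENNReal.ofReal (C * a ^ ((1:ℝ)/2 - M)) := by
  obtain ⟨C, hC, hG⟩ := exists_supL2VarLE_rpowPolyExp_one (by linarith : (1 : ℝ) ≤ ρ)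
    (by linarith : (1 / 2 - M : ℝ) < 0) (iterDerivPoly M k)
  refine ⟨C, hC, fun a ha => hG.of_eq_mul_comp_div (by linarith) ha (by positivity) fun t ht => ?_⟩
  rw [Fresol_eq_rpowPolyExp k M a ht, rpowPolyExp_eq_mul_rpowPolyExp_one _ _ ha ht]
end
end
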